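/- There exist constants c > 0 and δ > 0 such that the following holds with m = ⌈c·n⌉: with high probability as n → ∞, the uniform random graph G(n,m) has the property that for every set S of ⌈n/2⌉ vertices, the subgraph of G(n,m) induced by S contains a connected component with at least δ·n vertices. -/

import Mathlib

open Filter Topology

noncomputable section

/-- The sample space of `G(n,m)`: edge sets, i.e. sets of `m` non-diagonal unordered pairs
of vertices of `{0,…,n-1}`, each such set being equally likely. -/
def edgeSets (n m : ℕ) : Set (Finset (Sym2 (Fin n))) :=
  {E | E.card = m ∧ ∀ e ∈ E, ¬ e.IsDiag}

/-- The property that in the graph with edge set `E`, every set `S` of `⌈n/2⌉` vertices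
induces a subgraph containing a connected component with at least `δ·n` vertices. -/
def everyHalfSetHasBigComponent (n : ℕ) (δ : ℝ) (E : Finset (Sym2 (Fin n))) : Prop :=
  ∀ S : Finset (Fin n), S.card = ⌈(n : ℝ) / 2⌉₊ →
    ∃ v : (S : Set (Fin n)),
      δ * n ≤ (Nat.card {w // (SimpleGraph.induce (S : Set (Fin n))
          (SimpleGraph.fromEdgeSet (E : Set (Sym2 (Fin n))))).Reachable v w} : ℝ)

/-!
If some set `S` of `⌈n/2⌉` vertices induces only components with fewer than `n/8` vertices,
uniting components of `G[S]` greedily splits `S` into two parts `A`, `B` with `|A| ≥ n/8 - 1`,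
`|B| ≥ n/4` and no edge between them, so the graph misses all of at least `1/32` of the
`N = n.choose 2` possible edges. There are at most `4^n` pairs `(A, B)`, and a uniform `m`-subset
of the `N` pairs avoids a fixed set of `K` of them with probability at most `(1 - K/N)^m`. With
`m = 64n` the union bound gives failure probability at most `(4 (31/32)^64)^n → 0`.
-/

open Finset

namespace Nat

theorem descFactorial_mul_pow_le {a b : ℕ} (hab : a ≤ b) (m : ℕ) :
    a.descFactorial m * b ^ m ≤ a ^ m * b.descFactorial m := by
  induction m with
  | zero => simp
  | succ m ih =>
    have step : (a - m) * b ≤ a * (b - m) := by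
      rcases le_or_gt m a with hma | hma
      · zify [hma, hma.trans hab]; nlinarith
      · simp [Nat.sub_eq_zero_of_le hma.le]
    rw [descFactorial_succ, descFactorial_succ, pow_succ, pow_succ]
    calc (a - m) * a.descFactorial m * (b ^ m * b)
        = (a.descFactorial m * b ^ m) * ((a - m) * b) := by ring
      _ ≤ (a ^ m * b.descFactorial m) * (a * (b - m)) := Nat.mul_le_mul ih step
      _ = a ^ m * a * ((b - m) * b.descFactorial m) := by ring

theorem choose_mul_pow_le {a b : ℕ} (hab : a ≤ b) (m : ℕ) :
    a.choose m * b ^ m ≤ a ^ m * b.choose m := by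
  have h := descFactorial_mul_pow_le hab m
  rw [descFactorial_eq_factorial_mul_choose, descFactorial_eq_factorial_mul_choose,
    mul_assoc, mul_left_comm (a ^ m)] at h
  exact Nat.le_of_mul_le_mul_left h m.factorial_pos

end Nat

section PowersetCard

variable {α : Type*} [DecidableEq α]

theorem Finset.card_powersetCard_sdiff_le {T C : Finset α} (hC : C ⊆ T) (m : ℕ) :
    (#(powersetCard m (T \ C)) : ℝ) ≤ (1 - #C / #T) ^ m * #(powersetCard m T) := by
  rcases T.eq_empty_or_nonempty with rfl | hT
  · simp_all
  have hT0 : (0 : ℝ) < #T := by exact_mod_cast hT.card_pos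
  have h := Nat.choose_mul_pow_le (card_le_card (sdiff_subset (s := T) (t := C))) m
  rw [card_powersetCard, card_powersetCard]
  calc ((#(T \ C)).choose m : ℝ) ≤ (#(T \ C)) ^ m * (#T).choose m / #T ^ m := by
        rw [le_div_iff₀ (by positivity)]; exact_mod_cast h
    _ = (1 - #C / #T) ^ m * (#T).choose m := by
        rw [card_sdiff_of_subset hC, Nat.cast_sub (card_le_card hC)]
        rw [one_sub_div hT0.ne', div_pow]
        field_simp

theorem Finset.card_filter_exists_disjoint_le {ι : Type*} (T : Finset α) (I : Finset ι)
    (C : ι → Finset α) (hC : ∀ i ∈ I, C i ⊆ T) {q : ℝ} (hq : ∀ i ∈ I, 1 - #(C i) / #T ≤ q)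
    (m : ℕ) :
    (#{E ∈ powersetCard m T | ∃ i ∈ I, Disjoint E (C i)} : ℝ) ≤
      #I * q ^ m * #(powersetCard m T) := by
  have hcover : {E ∈ powersetCard m T | ∃ i ∈ I, Disjoint E (C i)} ⊆
      I.biUnion fun i => powersetCard m (T \ C i) := by
    intro E hE
    simp only [mem_filter, mem_powersetCard] at hE
    obtain ⟨⟨hET, hEm⟩, i, hi, hdisj⟩ := hE
    exact mem_biUnion.2 ⟨i, hi, mem_powersetCard.2 ⟨subset_sdiff.2 ⟨hET, hdisj⟩, hEm⟩⟩
  have hterm : ∀ i ∈ I, (#(powersetCard m (T \ C i)) : ℝ) ≤ q ^ m * #(powersetCard m T) := by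
    intro i hi
    have hnonneg : (0 : ℝ) ≤ 1 - #(C i) / #T := by
      rcases (#T).eq_zero_or_pos with hT | hT
      · simp [hT]
      rw [sub_nonneg, div_le_one (by exact_mod_cast hT)]
      exact_mod_cast card_le_card (hC i hi)
    refine (card_powersetCard_sdiff_le (hC i hi) m).trans ?_
    gcongr
    exact hq i hi
  calc (#{E ∈ powersetCard m T | ∃ i ∈ I, Disjoint E (C i)} : ℝ)
      ≤ #(I.biUnion fun i => powersetCard m (T \ C i)) := by exact_mod_cast card_le_card hcover
    _ ≤ ∑ i ∈ I, (#(powersetCard m (T \ C i)) : ℝ) := by exact_mod_cast card_biUnion_le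
    _ ≤ ∑ i ∈ I, q ^ m * #(powersetCard m T) := sum_le_sum hterm
    _ = #I * q ^ m * #(powersetCard m T) := by rw [sum_const, nsmul_eq_mul, mul_assoc]

end PowersetCard

namespace SimpleGraph

variable {V : Type*} [Fintype V] (G : SimpleGraph V)

theorem exists_finset_no_adj_card_le_le_add {s b : ℕ}
    (hs : ∀ v, Nat.card {w // G.Reachable v w} ≤ s) (hb : b ≤ Fintype.card V) :
    ∃ A : Finset V, (∀ v ∈ A, ∀ w ∉ A, ¬ G.Adj v w) ∧ #A ≤ b ∧ b ≤ #A + s := by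
  classical
  let IsClosed (A : Finset V) : Prop := ∀ v ∈ A, ∀ w, G.Reachable v w → w ∈ A
  obtain ⟨A, hA, hAmax⟩ := exists_max_image {A : Finset V | IsClosed A ∧ #A ≤ b} card
    ⟨∅, by simp [IsClosed]⟩
  simp only [mem_filter, mem_univ, true_and] at hA hAmax
  obtain ⟨hAclosed, hAb⟩ := hA
  refine ⟨A, fun v hv w hw hadj => hw (hAclosed v hv w hadj.reachable), hAb, ?_⟩
  by_contra! hsmall
  obtain ⟨v, hv⟩ : ∃ v, v ∉ A := by
    by_contra! hall
    have : #A = Fintype.card V := by rw [eq_univ_of_forall hall, card_univ]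
    omega
  let C : Finset V := {w | G.Reachable v w}
  have hC : #C ≤ s := by
    simpa [C, Fintype.card_subtype, Nat.card_eq_fintype_card] using hs v
  have hAC : IsClosed (A ∪ C) := by
    intro u hu w huw
    rcases mem_union.1 hu with hu | hu
    · exact mem_union_left _ (hAclosed u hu w huw)
    · exact mem_union_right _ (mem_filter.2 ⟨mem_univ _, (mem_filter.1 hu).2.trans huw⟩)
  have hlt : #A < #(A ∪ C) :=
    card_lt_card (ssubset_of_subset_of_ne subset_union_left fun h =>
      hv (h ▸ mem_union_right _ (by simp [C])))
  have := hAmax (A ∪ C) ⟨hAC, (card_union_le A C).trans (by omega)⟩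
  omega

end SimpleGraph

theorem exists_cut_of_not_everyHalfSetHasBigComponent {n : ℕ} {E : Finset (Sym2 (Fin n))}
    (h : ¬ everyHalfSetHasBigComponent n (1 / 8) E) :
    ∃ A B : Finset (Fin n), Disjoint A B ∧ (n : ℝ) / 8 - 1 ≤ #A ∧ (n : ℝ) / 4 ≤ #B ∧
      ∀ a ∈ A, ∀ b ∈ B, s(a, b) ∉ E := by
  simp only [everyHalfSetHasBigComponent, not_forall, not_exists, not_le] at h
  obtain ⟨S, hS, hsmall⟩ := h
  set G := (SimpleGraph.fromEdgeSet (E : Set (Sym2 (Fin n)))).induce (S : Set (Fin n))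
  have hcardV : Fintype.card (S : Set (Fin n)) = #S := by simp
  have hhalf : (n : ℝ) / 2 ≤ #S := hS ▸ Nat.le_ceil _
  obtain ⟨A, hAB, hAb, hbA⟩ := G.exists_finset_no_adj_card_le_le_add
    (s := ⌊(n : ℝ) / 8⌋₊) (b := ⌊(n : ℝ) / 4⌋₊)
    (fun v => Nat.le_floor (by linarith [hsmall v]))
    (by
      rw [hcardV, ← Nat.cast_le (α := ℝ)]
      linarith [Nat.floor_le (by positivity : (0 : ℝ) ≤ n / 4)])
  refine ⟨A.map (Function.Embedding.subtype _), Aᶜ.map (Function.Embedding.subtype _),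
    (Finset.disjoint_map _).2 disjoint_compl_right, ?_, ?_, ?_⟩
  · rw [card_map]
    have := Nat.lt_floor_add_one ((n : ℝ) / 4)
    have := Nat.floor_le (by positivity : (0 : ℝ) ≤ n / 8)
    have : (⌊(n : ℝ) / 4⌋₊ : ℝ) ≤ #A + ⌊(n : ℝ) / 8⌋₊ := by exact_mod_cast hbA
    linarith
  · rw [card_map, card_compl, Nat.cast_sub (card_le_univ A), hcardV]
    have := Nat.floor_le (by positivity : (0 : ℝ) ≤ n / 4)
    have : (#A : ℝ) ≤ ⌊(n : ℝ) / 4⌋₊ := by exact_mod_cast hAb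
    linarith
  · simp only [Finset.mem_map, Function.Embedding.coe_subtype, mem_compl]
    rintro _ ⟨a, ha, rfl⟩ _ ⟨b, hb, rfl⟩ hE
    refine hAB a ha b hb ⟨hE, fun hab => hb (Subtype.ext hab ▸ ha)⟩

section CrossEdges

variable {V : Type*} [DecidableEq V]

def crossEdges (A B : Finset V) : Finset (Sym2 V) :=
  (A ×ˢ B).image fun p => s(p.1, p.2)

theorem card_crossEdges {A B : Finset V} (h : Disjoint A B) : #(crossEdges A B) = #A * #B := by
  rw [crossEdges, card_image_of_injOn, card_product]
  rintro ⟨a, b⟩ hab ⟨a', b'⟩ hab' heq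
  simp only [coe_product, Set.mem_prod, mem_coe] at hab hab'
  rcases Sym2.eq_iff.1 heq with ⟨rfl, rfl⟩ | ⟨rfl, rfl⟩
  · rfl
  · exact absurd hab'.2 (disjoint_left.1 h hab.1)

theorem crossEdges_subset_edgeFinset_top [Fintype V] {A B : Finset V} (h : Disjoint A B) :
    crossEdges A B ⊆ (⊤ : SimpleGraph V).edgeFinset := by
  simp only [crossEdges, image_subset_iff, mem_product, SimpleGraph.mem_edgeFinset,
    SimpleGraph.edgeSet_top, Set.mem_compl_iff, Sym2.mem_diagSet, Sym2.mk_isDiag_iff]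
  rintro ⟨a, b⟩ ⟨ha, hb⟩ hab
  exact disjoint_left.1 h ha (hab ▸ hb)

theorem disjoint_crossEdges_iff {E : Finset (Sym2 V)} {A B : Finset V} :
    Disjoint E (crossEdges A B) ↔ ∀ a ∈ A, ∀ b ∈ B, s(a, b) ∉ E := by
  simp only [disjoint_right, crossEdges, mem_image, mem_product]
  aesop

end CrossEdges

theorem edgeSets_eq_powersetCard (n m : ℕ) :
    edgeSets n m = ↑(powersetCard m (⊤ : SimpleGraph (Fin n)).edgeFinset) := by
  ext E
  simp [edgeSets, subset_iff, and_comm, Sym2.mem_diagSet]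

theorem cast_choose_two_le_thirty_two_mul {n : ℕ} {a b : ℝ} (hn : 16 ≤ n)
    (ha : (n : ℝ) / 8 - 1 ≤ a) (hb : (n : ℝ) / 4 ≤ b) : (n.choose 2 : ℝ) ≤ 32 * (a * b) := by
  have : (16 : ℝ) ≤ n := by exact_mod_cast hn
  rw [Nat.cast_choose_two]
  nlinarith [mul_le_mul ha hb (by positivity) (by linarith)]

theorem ncard_not_everyHalfSetHasBigComponent_le {n : ℕ} (hn : 16 ≤ n) (m : ℕ) :
    ({E ∈ edgeSets n m | ¬ everyHalfSetHasBigComponent n (1 / 8) E}.ncard : ℝ) ≤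
      4 ^ n * (31 / 32) ^ m * (edgeSets n m).ncard := by
  classical
  rw [edgeSets_eq_powersetCard, Set.ncard_coe_finset]
  set T := (⊤ : SimpleGraph (Fin n)).edgeFinset
  have hsep : {E ∈ (powersetCard m T : Set _) | ¬ everyHalfSetHasBigComponent n (1 / 8) E} =
      ↑({E ∈ powersetCard m T | ¬ everyHalfSetHasBigComponent n (1 / 8) E}) := by
    ext; simp
  rw [hsep, Set.ncard_coe_finset]
  let I : Finset (Finset (Fin n) × Finset (Fin n)) :=
    {p | Disjoint p.1 p.2 ∧ (n.choose 2 : ℝ) ≤ 32 * (#p.1 * #p.2)}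
  have hT : #T = n.choose 2 := by
    rw [SimpleGraph.card_edgeFinset_top_eq_card_choose_two, Fintype.card_fin]
  have hI : (#I : ℝ) ≤ 4 ^ n := by
    have : #I ≤ 4 ^ n := (card_le_univ I).trans_eq (by simp [← mul_pow])
    exact_mod_cast this
  have hq : ∀ p ∈ I, 1 - (#(crossEdges p.1 p.2) : ℝ) / #T ≤ 31 / 32 := by
    intro p hp
    obtain ⟨hdisj, hcard⟩ := (mem_filter.1 hp).2
    have hN : (0 : ℝ) < n.choose 2 := by exact_mod_cast Nat.choose_pos (by omega)
    rw [card_crossEdges hdisj, hT, Nat.cast_mul, sub_le_iff_le_add, ← sub_le_iff_le_add',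
      le_div_iff₀ hN]
    linarith
  have hbad : {E ∈ powersetCard m T | ¬ everyHalfSetHasBigComponent n (1 / 8) E} ⊆
      {E ∈ powersetCard m T | ∃ p ∈ I, Disjoint E (crossEdges p.1 p.2)} := by
    refine monotone_filter_right _ fun E _ hE => ?_
    obtain ⟨A, B, hAB, hA, hB, hno⟩ := exists_cut_of_not_everyHalfSetHasBigComponent hE
    exact ⟨(A, B), mem_filter.2 ⟨mem_univ _, hAB, cast_choose_two_le_thirty_two_mul hn hA hB⟩,
      disjoint_crossEdges_iff.2 hno⟩
  calc _ ≤ (#{E ∈ powersetCard m T | ∃ p ∈ I, Disjoint E (crossEdges p.1 p.2)} : ℝ) := by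
        exact_mod_cast card_le_card hbad
    _ ≤ #I * (31 / 32) ^ m * #(powersetCard m T) :=
        card_filter_exists_disjoint_le T I _ (fun p hp => crossEdges_subset_edgeFinset_top
          (mem_filter.1 hp).2.1) hq m
    _ ≤ 4 ^ n * (31 / 32) ^ m * #(powersetCard m T) := by gcongr

theorem Set.one_sub_le_ncard_sep_div {α : Type*} {s : Set α} (hs : s.Finite) (hpos : 0 < s.ncard)
    {p : α → Prop} {ε : ℝ} (h : ({x ∈ s | ¬ p x}.ncard : ℝ) ≤ ε * s.ncard) :
    1 - ε ≤ ({x ∈ s | p x}.ncard : ℝ) / s.ncard := by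
  have hsplit : ({x ∈ s | p x}.ncard : ℝ) + {x ∈ s | ¬ p x}.ncard = s.ncard := by
    exact_mod_cast Set.ncard_inter_add_ncard_sdiff_eq_ncard s {x | p x} hs
  have hpos' : (0 : ℝ) < s.ncard := by exact_mod_cast hpos
  rw [le_div_iff₀ hpos']
  linarith

theorem ncard_sep_edgeSets_div_le_one (n m : ℕ) (P : Finset (Sym2 (Fin n)) → Prop) :
    ({E ∈ edgeSets n m | P E}.ncard : ℝ) / (edgeSets n m).ncard ≤ 1 :=
  div_le_one_of_le₀ (Nat.cast_le.2 (Set.ncard_le_ncard (Set.sep_subset _ _) (Set.toFinite _)))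
    (Nat.cast_nonneg _)

theorem one_sub_pow_le_ratio_everyHalfSetHasBigComponent {n : ℕ} (hn : 129 ≤ n) :
    1 - (4 * (31 / 32) ^ 64 : ℝ) ^ n ≤
      ({E ∈ edgeSets n ⌈(64 : ℝ) * n⌉₊ | everyHalfSetHasBigComponent n (1 / 8) E}.ncard : ℝ) /
        (edgeSets n ⌈(64 : ℝ) * n⌉₊).ncard := by
  have hm : ⌈(64 : ℝ) * n⌉₊ = 64 * n := by exact_mod_cast Nat.ceil_natCast (64 * n)
  have hmN : 64 * n ≤ n.choose 2 := by
    have : (129 : ℝ) ≤ n := by exact_mod_cast hn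
    have : ((64 * n : ℕ) : ℝ) ≤ n.choose 2 := by
      rw [Nat.cast_choose_two]; push_cast; nlinarith
    exact_mod_cast this
  rw [hm]
  refine Set.one_sub_le_ncard_sep_div (Set.toFinite _) ?_ ?_
  · rw [edgeSets_eq_powersetCard, Set.ncard_coe_finset, card_powersetCard,
      SimpleGraph.card_edgeFinset_top_eq_card_choose_two, Fintype.card_fin]
    exact Nat.choose_pos hmN
  · rw [mul_pow, ← pow_mul, mul_comm 64 n]
    exact ncard_not_everyHalfSetHasBigComponent_le (by omega) _

/-- There are constants `c > 0` and `δ > 0` such that, with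
`m = ⌈c·n⌉`, w.h.p. the uniform random graph `G(n,m)` has the property that every set of
`⌈n/2⌉` vertices induces a subgraph containing a connected component with at least `δ·n`
vertices. (The probability is the proportion of admissible edge sets with the property.) -/
theorem vertex_achlioptas_offline_giant :
    ∃ c : ℝ, 0 < c ∧ ∃ δ : ℝ, 0 < δ ∧
      Tendsto
        (fun n => ((Set.ncard {E ∈ edgeSets n ⌈c * n⌉₊ |
              everyHalfSetHasBigComponent n δ E}) : ℝ)
            / ((Set.ncard (edgeSets n ⌈c * n⌉₊)) : ℝ))
        atTop (nhds 1) := by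
  refine ⟨64, by norm_num, 1 / 8, by norm_num, ?_⟩
  have hr : (4 * (31 / 32) ^ 64 : ℝ) < 1 := by norm_num
  have hlower : Tendsto (fun n : ℕ => 1 - (4 * (31 / 32) ^ 64 : ℝ) ^ n) atTop (nhds 1) := by
    simpa using (tendsto_pow_atTop_nhds_zero_of_lt_one (by norm_num) hr).const_sub 1
  refine tendsto_of_tendsto_of_tendsto_of_le_of_le' hlower tendsto_const_nhds ?_ ?_
  · filter_upwards [eventually_ge_atTop 129] with n hn
    exact one_sub_pow_le_ratio_everyHalfSetHasBigComponent hn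
  · exact Eventually.of_forall fun n => ncard_sep_edgeSets_div_le_one _ _ _

end
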